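/- Let C₁ = {(cos s, sin s, 0) : s ∈ ℝ} be the standard round unit circle in the x₁x₂-plane of ℝ³. Then the loop λ : [0, 2π] → ℝ³ ∖ C₁ given by λ(s) = (1 + cos s, 0, sin s) (a parametrization of the standard Hopf partner circle C₂) is not null-homotopic in ℝ³ ∖ C₁. -/

import Mathlib

/-!
The map `x ↦ (√(x₁² + x₂²) - 1) + i x₃` sends `ℝ³ ∖ C₁` to `ℂ ∖ {0}` and `λ` to the loop
`s ↦ exp (i s)`, so a null-homotopy of `λ` would give a null-homotopy of that loop in `ℂ ∖ {0}`.
Since the square is simply connected, such a homotopy has a continuous logarithm `L`. The winding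
`L (t, 2π) - L (t, 0)` lies in `2πiℤ` and depends continuously on `t`, hence is constant; but it
is `2πi` at `t = 0` and `0` at `t = 1`.
-/

noncomputable section

/-- ℝ³ with the Euclidean metric. -/
abbrev E3 := EuclideanSpace ℝ (Fin 3)

/-- The standard round unit circle in the x₁x₂-plane. -/
def C1 : Set E3 := {x | ∃ s : ℝ, x = ![Real.cos s, Real.sin s, 0]}

/-- The standard Hopf partner circle, parametrized: `λ(s) = (1 + cos s, 0, sin s)`. -/
def lam (s : ℝ) : E3 := WithLp.toLp 2 ![1 + Real.cos s, 0, Real.sin s]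

open Real Set
open Complex (I)

theorem IsPreconnected.sub_eq_sub_of_exp_eq {X : Type*} [TopologicalSpace X] {S : Set X}
    (hS : IsPreconnected S) {u v : X → ℂ} (hu : ContinuousOn u S) (hv : ContinuousOn v S)
    (h : ∀ x ∈ S, Complex.exp (u x) = Complex.exp (v x)) {x y : X} (hx : x ∈ S) (hy : y ∈ S) :
    u x - v x = u y - v y := by
  have hT : IsDiscrete (AddSubgroup.zmultiples (2 * π * I) : Set ℂ) :=
    isDiscrete_iff_discreteTopology.mpr (NormedSpace.discreteTopology_zmultiples _)
  refine hS.constant_of_mapsTo hT (hu.sub hv) (fun z hz => ?_) hx hy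
  obtain ⟨n, hn⟩ := Complex.exp_eq_exp_iff_exists_int.mp (h z hz)
  exact ⟨n, by simp [hn]⟩

theorem exists_continuous_exp_eq {X : Type*} [TopologicalSpace X] [SimplyConnectedSpace X]
    [LocallyPathConnectedSpace X] {f : X → ℂ} (hf : Continuous f) (hf0 : ∀ x, f x ≠ 0) :
    ∃ L : X → ℂ, Continuous L ∧ ∀ x, Complex.exp (L x) = f x := by
  obtain ⟨x₀⟩ := (inferInstance : Nonempty X)
  obtain ⟨L, -, hL⟩ := (Complex.isCoveringMapOn_exp.existsUnique_continuousMap_lifts ⟨f, hf⟩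
    (Complex.exp_log (hf0 x₀)) hf0).exists
  exact ⟨L, L.continuous, congrFun hL⟩

theorem exists_continuous_exp_eqOn_Icc_prod {a b c d : ℝ} (hab : a ≤ b) (hcd : c ≤ d)
    {G : ℝ × ℝ → ℂ} (hG : ContinuousOn G (Icc a b ×ˢ Icc c d))
    (hne : ∀ p ∈ Icc a b ×ˢ Icc c d, G p ≠ 0) :
    ∃ L : ℝ × ℝ → ℂ, Continuous L ∧ EqOn (Complex.exp ∘ L) G (Icc a b ×ˢ Icc c d) := by
  -- Precomposing with the retraction of the plane onto the rectangle gives a map on all of `ℝ²`,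
  -- which is simply connected.
  set r : ℝ × ℝ → ℝ × ℝ := fun p => (projIcc a b hab p.1, projIcc c d hcd p.2)
  have hr : ∀ p, r p ∈ Icc a b ×ˢ Icc c d := fun p => ⟨Subtype.prop _, Subtype.prop _⟩
  obtain ⟨L, hL, hexpL⟩ :=
    exists_continuous_exp_eq (hG.comp_continuous (by fun_prop) hr) (fun p => hne _ (hr p))
  refine ⟨L, hL, fun p hp => ?_⟩
  simp [hexpL, r, projIcc_of_mem _ hp.1, projIcc_of_mem _ hp.2]

theorem exp_loop_not_nullhomotopic {G : ℝ × ℝ → ℂ}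
    (hG : ContinuousOn G (Icc (0 : ℝ) 1 ×ˢ Icc 0 (2 * π)))
    (hG0 : ∀ s ∈ Icc 0 (2 * π), G (0, s) = Complex.exp (s * I))
    {c : ℂ} (hG1 : ∀ s ∈ Icc 0 (2 * π), G (1, s) = c)
    (hper : ∀ t ∈ Icc (0 : ℝ) 1, G (t, 0) = G (t, 2 * π))
    (hne : ∀ p ∈ Icc (0 : ℝ) 1 ×ˢ Icc 0 (2 * π), G p ≠ 0) : False := by
  have h2π : (0 : ℝ) ≤ 2 * π := by positivity
  have hI0 : (0 : ℝ) ∈ Icc 0 (2 * π) := left_mem_Icc.2 h2π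
  have hI2π : 2 * π ∈ Icc 0 (2 * π) := right_mem_Icc.2 h2π
  have hJ0 : (0 : ℝ) ∈ Icc (0 : ℝ) 1 := left_mem_Icc.2 zero_le_one
  have hJ1 : (1 : ℝ) ∈ Icc (0 : ℝ) 1 := right_mem_Icc.2 zero_le_one
  obtain ⟨L, hL, hexpL⟩ := exists_continuous_exp_eqOn_Icc_prod zero_le_one h2π hG hne
  have hLG : ∀ t ∈ Icc (0 : ℝ) 1, ∀ s ∈ Icc 0 (2 * π), Complex.exp (L (t, s)) = G (t, s) :=
    fun t ht s hs => hexpL ⟨ht, hs⟩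
  have hwind0 : L (0, 2 * π) - L (0, 0) = 2 * π * I := by
    have := isPreconnected_Icc.sub_eq_sub_of_exp_eq (u := fun s => L (0, s))
      (v := fun s : ℝ => s * I) (by fun_prop) (by fun_prop)
      (fun s hs => by rw [hLG 0 hJ0 s hs, hG0 s hs]) hI2π hI0
    push_cast at this
    linear_combination this
  have hwind1 : L (1, 2 * π) - L (1, 0) = 0 := by
    have := isPreconnected_Icc.sub_eq_sub_of_exp_eq (u := fun s => L (1, s))
      (v := fun _ => L (1, 0)) (by fun_prop) (by fun_prop)
      (fun s hs => by rw [hLG 1 hJ1 s hs, hLG 1 hJ1 0 hI0, hG1 s hs, hG1 0 hI0]) hI2π hI0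
    simpa using this
  have hwind_const : L (0, 2 * π) - L (0, 0) = L (1, 2 * π) - L (1, 0) :=
    isPreconnected_Icc.sub_eq_sub_of_exp_eq (u := fun t => L (t, 2 * π))
      (v := fun t => L (t, 0)) (by fun_prop) (by fun_prop)
      (fun t ht => by rw [hLG t ht _ hI2π, hLG t ht _ hI0, hper t ht]) hJ0 hJ1
  rw [hwind0, hwind1] at hwind_const
  simp [Real.pi_ne_zero] at hwind_const

theorem exists_cos_sin_eq_of_sq_add_sq_eq_one {a b : ℝ} (h : a ^ 2 + b ^ 2 = 1) :
    ∃ θ : ℝ, cos θ = a ∧ sin θ = b := by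
  obtain ⟨θ, hθ⟩ := (Complex.norm_eq_one_iff ⟨a, b⟩).mp (by
    rw [Complex.norm_def, Complex.normSq_apply]; simp only; rw [← sq, ← sq, h, Real.sqrt_one])
  exact ⟨θ, by simpa using congrArg Complex.re hθ, by simpa using congrArg Complex.im hθ⟩

/-- The position of `x` in its meridian half-plane, measured from the point of `C1` in it. -/
def meridianCoord (x : E3) : ℂ := (√(x 0 ^ 2 + x 1 ^ 2) - 1 : ℝ) + x 2 * I

theorem continuous_meridianCoord : Continuous meridianCoord := by
  unfold meridianCoord
  fun_prop

theorem mem_C1_of_meridianCoord_eq_zero {x : E3} (hx : meridianCoord x = 0) : x ∈ C1 := by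
  have hr : √(x 0 ^ 2 + x 1 ^ 2) = 1 := by
    have := congrArg Complex.re hx
    simp only [meridianCoord, Complex.add_re, Complex.ofReal_re, Complex.re_ofReal_mul,
      Complex.I_re, mul_zero, add_zero, Complex.zero_re] at this
    linarith
  have h2 : x 2 = 0 := by simpa [meridianCoord] using congrArg Complex.im hx
  obtain ⟨θ, hcos, hsin⟩ := exists_cos_sin_eq_of_sq_add_sq_eq_one (Real.sqrt_eq_one.mp hr)
  refine ⟨θ, ?_⟩
  ext i
  fin_cases i <;> simp [hcos, hsin, h2]

theorem meridianCoord_lam (s : ℝ) : meridianCoord (lam s) = Complex.exp (s * I) := by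
  have h : √((1 + cos s) ^ 2) = 1 + cos s := Real.sqrt_sq (by linarith [neg_one_le_cos s])
  apply Complex.ext <;>
    simp [meridianCoord, lam, h, Complex.cos_ofReal_re, Complex.sin_ofReal_re]

/-- The loop `λ : [0, 2π] → ℝ³ ∖ C₁` is not null-homotopic in `ℝ³ ∖ C₁`:
there is no homotopy of loops in the complement of `C₁` from `λ` to a constant loop. -/
theorem lam_not_nullhomotopic_in_complement :
    ¬ ∃ F : ℝ × ℝ → E3,
      ContinuousOn F (Set.Icc (0 : ℝ) 1 ×ˢ Set.Icc (0 : ℝ) (2 * Real.pi)) ∧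
      (∀ s ∈ Set.Icc (0 : ℝ) (2 * Real.pi), F (0, s) = lam s) ∧
      (∃ y : E3, ∀ s ∈ Set.Icc (0 : ℝ) (2 * Real.pi), F (1, s) = y) ∧
      (∀ t ∈ Set.Icc (0 : ℝ) 1, F (t, 0) = F (t, 2 * Real.pi)) ∧
      (∀ p ∈ Set.Icc (0 : ℝ) 1 ×ˢ Set.Icc (0 : ℝ) (2 * Real.pi), F p ∉ C1) := by
  rintro ⟨F, hF, hF0, ⟨y, hF1⟩, hper, hFC⟩
  exact exp_loop_not_nullhomotopic (G := meridianCoord ∘ F) (c := meridianCoord y)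
    (continuous_meridianCoord.comp_continuousOn hF)
    (fun s hs => by simp [hF0 s hs, meridianCoord_lam])
    (fun s hs => by simp [hF1 s hs])
    (fun t ht => by simp [hper t ht])
    (fun p hp hzero => hFC p hp (mem_C1_of_meridianCoord_eq_zero hzero))
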